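/- arXiv:math/0005110 — 9 statements merged into one kernel-verified Lean document; each statement's English description precedes it below -/
import Mathlib

section
/- For every positive integer r, the binomial coefficients satisfy C(2r+1, r+1) = \sum_{k=0}^{r} (r + 1 - k) * C(r - 1 + k, k). -/
lemma hockey (n m : ℕ) :
    ∑ k ∈ Finset.range (m + 1), Nat.choose (n + k) k = Nat.choose (n + m + 1) m := by
  induction m with
  | zero => simp
  | succ m ih =>
      rw [Finset.sum_range_succ, ih]
      have : n + (m + 1) + 1 = (n + m + 1) + 1 := by ring
      rw [this, Nat.choose_succ_succ' (n + m + 1) m]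
      ring_nf

lemma weighted (n m : ℕ) :
    ∑ k ∈ Finset.range (m + 1), (m + 1 - k) * Nat.choose (n + k) k
      = Nat.choose (n + m + 2) m := by
  induction m with
  | zero => simp
  | succ m ih =>
      have h1 : ∀ k ∈ Finset.range (m + 2), (m + 2 - k) * Nat.choose (n + k) k
          = (m + 1 - k) * Nat.choose (n + k) k + Nat.choose (n + k) k := by
        intro k hk
        rcases Nat.lt_or_ge k (m + 2) with h | h
        · have : m + 2 - k = (m + 1 - k) + 1 := by omega
          rw [this, Nat.add_mul, Nat.one_mul]
        · simp at hk; omega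
      rw [Finset.sum_congr rfl h1, Finset.sum_add_distrib, hockey n (m + 1),
        Finset.sum_range_succ, Nat.sub_self, Nat.zero_mul, Nat.add_zero, ih,
        show n + (m + 1) + 1 = n + m + 2 by ring,
        show n + (m + 1) + 2 = n + m + 2 + 1 by ring,
        Nat.choose_succ_succ' (n + m + 2) m]

/-- For every positive integer `r`, the binomial coefficients satisfy
`C(2r+1, r+1) = ∑_{k=0}^{r} (r + 1 - k) * C(r - 1 + k, k)`. -/
theorem choose_pascal_path_identity (r : ℕ) (hr : 0 < r) :
    Nat.choose (2 * r + 1) (r + 1) =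
      ∑ k ∈ Finset.range (r + 1), (r + 1 - k) * Nat.choose (r - 1 + k) k := by
  obtain ⟨s, rfl⟩ : ∃ s, r = s + 1 := ⟨r - 1, by omega⟩
  have h := weighted s (s + 1)
  have e1 : ∀ k, s + 1 - 1 + k = s + k := fun k => by omega
  have e2 : ∀ k, s + 1 + 1 - k = s + 1 + 1 - k := fun k => rfl
  calc Nat.choose (2 * (s + 1) + 1) (s + 1 + 1)
      = Nat.choose (2 * s + 3) (s + 2) := by ring_nf
    _ = Nat.choose (2 * s + 3) (2 * s + 3 - (s + 2)) := (Nat.choose_symm (by omega)).symm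
    _ = Nat.choose (s + (s + 1) + 2) (s + 1) := by congr 1 <;> omega
    _ = ∑ k ∈ Finset.range (s + 1 + 1), (s + 1 + 1 - k) * Nat.choose (s + k) k := h.symm
    _ = ∑ k ∈ Finset.range (s + 1 + 1), (s + 1 + 1 - k) * Nat.choose (s + 1 - 1 + k) k := by
        simp [e1]
end

section
/- For every positive integer r, the number of monotone partial maps from {1, ..., r} to {1, ..., r} whose domain is a nonempty interval equals C(2r+1, r+1) - (r + 1). (This number is the embedding rank d(T_r^{max}) of the maximal inflation algebra of the upper triangular matrix algebra T_r.) -/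
/-- A monotone partial map from the chain `Fin t` to the chain `Fin r` whose domain is a
nonempty interval: it consists of a closed interval `Set.Icc a b` (with `a ≤ b`) of the chain
`Fin t` together with a monotone function from that interval to `Fin r`.  Two such partial maps
are equal exactly when they have the same domain interval and the same function. -/
def IntervalMonotoneMap (t r : ℕ) : Type :=
  (p : {q : Fin t × Fin t // q.1 ≤ q.2}) ×
    ((Set.Icc p.val.1 p.val.2 : Set (Fin t)) →o Fin r)

lemma gapAux {n m : ℕ} {g : Fin n → Fin m} (hg : StrictMono g) :
    ∀ (d : ℕ) (i j : Fin n), (j : ℕ) = (i : ℕ) + d → (g i : ℕ) + d ≤ g j := by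
  intro d
  induction d with
  | zero =>
    intro i j h
    have : i = j := Fin.ext (by omega)
    subst this; simp
  | succ d ih =>
    intro i j h
    have hj' : (i : ℕ) + d < n := by have := j.isLt; omega
    have h1 := ih i ⟨(i : ℕ) + d, hj'⟩ rfl
    have hlt : (⟨(i : ℕ) + d, hj'⟩ : Fin n) < j := by
      rw [Fin.lt_def]; simp only []; omega
    have h2 := hg hlt
    rw [Fin.lt_def] at h2
    omega

lemma gap {n m : ℕ} {g : Fin n → Fin m} (hg : StrictMono g) {i j : Fin n} (h : i ≤ j) :
    (g i : ℕ) + ((j : ℕ) - i) ≤ g j :=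
  gapAux hg ((j : ℕ) - i) i j (by have := Fin.le_def.mp h; omega)

/-- The strictly monotone map `i ↦ f i + i` associated to a monotone map `f`. -/
def toEmb {n k : ℕ} (f : Fin (n + 1) →o Fin (k + 1)) : Fin (n + 1) ↪o Fin (n + 1 + k) :=
  OrderEmbedding.ofStrictMono
    (fun i => ⟨(f i : ℕ) + i, by have := (f i).isLt; have := i.isLt; omega⟩)
    (by
      intro i j hij
      have h1 := Fin.le_def.mp (f.monotone hij.le)
      have h2 := Fin.lt_def.mp hij
      rw [Fin.lt_def]
      simp only []
      omega)

lemma toEmb_apply {n k : ℕ} (f : Fin (n + 1) →o Fin (k + 1)) (i : Fin (n + 1)) :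
    (toEmb f i : ℕ) = (f i : ℕ) + i := rfl

lemma le_orderEmbOfFin {n m : ℕ} (s : Finset (Fin m)) (h : s.card = n + 1) (i : Fin (n + 1)) :
    (i : ℕ) ≤ s.orderEmbOfFin h i := by
  have h1 := gap (s.orderEmbOfFin h).strictMono (Fin.zero_le i)
  simp only [Fin.val_zero] at h1
  omega

lemma orderEmbOfFin_sub_lt {n k : ℕ} (s : Finset (Fin (n + 1 + k))) (h : s.card = n + 1)
    (i : Fin (n + 1)) : (s.orderEmbOfFin h i : ℕ) - i < k + 1 := by
  have h1 := gap (s.orderEmbOfFin h).strictMono (Fin.le_last i)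
  have h2 := (s.orderEmbOfFin h (Fin.last n)).isLt
  have h3 := i.isLt
  simp only [Fin.val_last] at h1
  omega

/-- The inverse direction: a finset of card `n+1` gives a monotone map. -/
def ofFinset {n k : ℕ} (s : Finset (Fin (n + 1 + k))) (h : s.card = n + 1) :
    Fin (n + 1) →o Fin (k + 1) where
  toFun i := ⟨(s.orderEmbOfFin h i : ℕ) - i, orderEmbOfFin_sub_lt s h i⟩
  monotone' := by
    intro i j hij
    have h1 := gap (s.orderEmbOfFin h).strictMono hij
    have h2 := Fin.le_def.mp hij
    rw [Fin.le_def]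
    simp only []
    omega

def ohEquiv (n k : ℕ) :
    (Fin (n + 1) →o Fin (k + 1)) ≃ {s : Finset (Fin (n + 1 + k)) // s.card = n + 1} where
  toFun f := ⟨Finset.univ.map (toEmb f).toEmbedding, by simp⟩
  invFun s := ofFinset s.1 s.2
  left_inv f := by
    have hu : ⇑(toEmb f) = (Finset.univ.map (toEmb f).toEmbedding).orderEmbOfFin (by simp) :=
      Finset.orderEmbOfFin_unique _ (fun i => Finset.mem_map_of_mem _ (Finset.mem_univ i))
        (toEmb f).strictMono
    ext i
    show ((Finset.univ.map (toEmb f).toEmbedding).orderEmbOfFin (by simp) i : ℕ) - i = f i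
    rw [← hu, toEmb_apply]
    omega
  right_inv s := by
    have hfun : ∀ i, toEmb (ofFinset s.1 s.2) i = s.1.orderEmbOfFin s.2 i := by
      intro i
      apply Fin.ext
      rw [toEmb_apply]
      show (s.1.orderEmbOfFin s.2 i : ℕ) - i + i = s.1.orderEmbOfFin s.2 i
      have := le_orderEmbOfFin s.1 s.2 i
      omega
    apply Subtype.ext
    apply Finset.eq_of_subset_of_card_le
    · intro x hx
      rw [Finset.mem_map] at hx
      obtain ⟨i, -, rfl⟩ := hx
      rw [show (toEmb (ofFinset s.1 s.2)).toEmbedding i = s.1.orderEmbOfFin s.2 i from hfun i]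
      exact Finset.orderEmbOfFin_mem s.1 s.2 i
    · simp [s.2]

lemma card_orderHom (n k : ℕ) :
    Nat.card (Fin (n + 1) →o Fin (k + 1)) = (n + 1 + k).choose (n + 1) := by
  rw [Nat.card_congr (ohEquiv n k), Nat.card_eq_fintype_card, Fintype.card_finset_len,
    Fintype.card_fin]

lemma card_Icc_orderHom (k : ℕ) (a b : Fin (k + 1)) (hab : a ≤ b) :
    Nat.card ((Set.Icc a b : Set (Fin (k + 1))) →o Fin (k + 1)) =
      ((b : ℕ) - a + 1 + k).choose ((b : ℕ) - a + 1) := by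
  have hab' : (a : ℕ) ≤ b := Fin.le_def.mp hab
  have hcard : (Finset.Icc a b).card = ((b : ℕ) - a) + 1 := by
    rw [Fin.card_Icc]; omega
  have iso1 : Fin ((b : ℕ) - a + 1) ≃o (Finset.Icc a b) := (Finset.Icc a b).orderIsoOfFin hcard
  have iso2 : ((Finset.Icc a b : Set (Fin (k + 1)))) ≃o (Set.Icc a b : Set (Fin (k + 1))) :=
    OrderIso.setCongr _ _ (Finset.coe_Icc a b)
  have iso : Fin ((b : ℕ) - a + 1) ≃o (Set.Icc a b : Set (Fin (k + 1))) := iso1.trans iso2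
  rw [← Nat.card_congr (OrderIso.arrowCongr iso (OrderIso.refl (Fin (k + 1)))).toEquiv,
    card_orderHom]

lemma key_sum (k : ℕ) :
    (∑ a ∈ Finset.range (k + 1), ∑ b ∈ Finset.range (k + 1),
        if a ≤ b then (b - a + 1 + k).choose (b - a + 1) else 0) + (k + 2) =
      (2 * (k + 1) + 1).choose (k + 1 + 1) := by
  have hinner : ∀ a ∈ Finset.range (k + 1),
      (∑ b ∈ Finset.range (k + 1), if a ≤ b then (b - a + 1 + k).choose (b - a + 1) else 0) + 1
        = (k - a + 1 + k + 1).choose (k + 1) := by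
    intro a ha
    rw [Finset.mem_range] at ha
    have h1 : (∑ b ∈ Finset.range (k + 1),
        if a ≤ b then (b - a + 1 + k).choose (b - a + 1) else 0)
        = ∑ b ∈ Finset.Ico a (k + 1), (b - a + 1 + k).choose (b - a + 1) := by
      rw [← Finset.sum_filter]
      congr 1
      ext b
      simp only [Finset.mem_filter, Finset.mem_range, Finset.mem_Ico]
      omega
    rw [h1, Finset.sum_Ico_eq_sum_range]
    have h2 : ∀ i, (a + i - a + 1 + k).choose (a + i - a + 1) = (i + 1 + k).choose k := by
      intro i
      have h : a + i - a = i := by omega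
      rw [h, Nat.add_comm (i + 1) k, Nat.choose_symm_add]
    rw [Finset.sum_congr rfl fun i _ => h2 i]
    have h3 : k + 1 - a = k - a + 1 := by omega
    rw [h3]
    have h4 := Finset.sum_range_succ' (fun i => (i + k).choose k) (k - a + 1)
    have h5 := Nat.sum_range_add_choose (k - a + 1) k
    simp only [Nat.zero_add, Nat.choose_self] at h4 h5
    omega
  rw [show k + 2 = (k + 1) + 1 by omega, ← Nat.add_assoc,
    show (∑ a ∈ Finset.range (k + 1), ∑ b ∈ Finset.range (k + 1),
        if a ≤ b then (b - a + 1 + k).choose (b - a + 1) else 0) + (k + 1)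
      = ∑ a ∈ Finset.range (k + 1), ((∑ b ∈ Finset.range (k + 1),
          if a ≤ b then (b - a + 1 + k).choose (b - a + 1) else 0) + 1) by
      rw [Finset.sum_add_distrib, Finset.sum_const, Finset.card_range, smul_eq_mul, Nat.mul_one],
    Finset.sum_congr rfl hinner, ← Finset.sum_range_reflect]
  have h6 : ∀ j ∈ Finset.range (k + 1),
      (k - (k + 1 - 1 - j) + 1 + k + 1).choose (k + 1) = (j + 1 + (k + 1)).choose (k + 1) := by
    intro j hj
    rw [Finset.mem_range] at hj
    congr 1
    omega
  rw [Finset.sum_congr rfl h6]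
  have h7 := Finset.sum_range_succ' (fun i => (i + (k + 1)).choose (k + 1)) (k + 1)
  have h8 := Nat.sum_range_add_choose (k + 1) (k + 1)
  simp only [Nat.zero_add, Nat.choose_self] at h7 h8
  have h9 : 2 * (k + 1) + 1 = k + 1 + (k + 1) + 1 := by omega
  rw [h9]
  omega

instance orderHomFinite {α β : Type*} [Preorder α] [Preorder β] [Finite α] [Finite β] :
    Finite (α →o β) :=
  Finite.of_injective (fun f => (f : α → β)) DFunLike.coe_injective


/-- For every positive integer `r`, the number of monotone partial maps from `{1, …, r}` to
`{1, …, r}` whose domain is a nonempty interval equals `C(2r+1, r+1) - (r+1)`.  This number is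
the embedding rank `d(T_r^{max})` of the maximal inflation algebra of the upper triangular
matrix algebra `T_r`. -/
theorem embedding_rank_Tr_max (r : ℕ) (hr : 0 < r) :
    Nat.card (IntervalMonotoneMap r r) =
      Nat.choose (2 * r + 1) (r + 1) - (r + 1) := by
  obtain ⟨k, rfl⟩ : ∃ k, r = k + 1 := ⟨r - 1, by omega⟩
  letI : ∀ p : {q : Fin (k + 1) × Fin (k + 1) // q.1 ≤ q.2},
      Fintype ((Set.Icc p.val.1 p.val.2 : Set (Fin (k + 1))) →o Fin (k + 1)) :=
    fun p => Fintype.ofFinite _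
  have h0 : Nat.card (IntervalMonotoneMap (k + 1) (k + 1)) =
      Fintype.card ((p : {q : Fin (k + 1) × Fin (k + 1) // q.1 ≤ q.2}) ×
        ((Set.Icc p.val.1 p.val.2 : Set (Fin (k + 1))) →o Fin (k + 1))) :=
    Nat.card_eq_fintype_card (α := (p : {q : Fin (k + 1) × Fin (k + 1) // q.1 ≤ q.2}) ×
        ((Set.Icc p.val.1 p.val.2 : Set (Fin (k + 1))) →o Fin (k + 1)))
  rw [h0, Fintype.card_sigma]
  have hterm : ∀ p : {q : Fin (k + 1) × Fin (k + 1) // q.1 ≤ q.2},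
      Fintype.card ((Set.Icc p.val.1 p.val.2 : Set (Fin (k + 1))) →o Fin (k + 1)) =
        ((p.val.2 : ℕ) - p.val.1 + 1 + k).choose ((p.val.2 : ℕ) - p.val.1 + 1) := by
    intro p
    rw [← Nat.card_eq_fintype_card, card_Icc_orderHom k _ _ p.2]
  rw [Finset.sum_congr rfl fun p _ => hterm p]
  letI : Fintype {q : Fin (k + 1) × Fin (k + 1) // q.1 ≤ q.2} := Subtype.fintype _
  have hsub := Finset.sum_subtype (F := Subtype.fintype _) (s := Finset.univ.filter fun q : Fin (k+1) × Fin (k+1) => q.1 ≤ q.2)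
    (p := fun q : Fin (k+1) × Fin (k+1) => q.1 ≤ q.2) (by simp)
    (f := fun q : Fin (k+1) × Fin (k+1) => ((q.2 : ℕ) - q.1 + 1 + k).choose ((q.2 : ℕ) - q.1 + 1))
  refine Eq.trans hsub.symm ?_
  rw [Finset.sum_filter, Fintype.sum_prod_type]
  have hfin : (∑ a : Fin (k + 1), ∑ b : Fin (k + 1),
      if a ≤ b then ((b : ℕ) - a + 1 + k).choose ((b : ℕ) - a + 1) else 0)
      = ∑ a ∈ Finset.range (k + 1), ∑ b ∈ Finset.range (k + 1),
        if a ≤ b then (b - a + 1 + k).choose (b - a + 1) else 0 := by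
    rw [← Fin.sum_univ_eq_sum_range]
    refine Finset.sum_congr rfl fun a _ => ?_
    rw [← Fin.sum_univ_eq_sum_range]
    refine Finset.sum_congr rfl fun b _ => ?_
    exact if_congr Fin.le_def rfl rfl
  rw [hfin]
  have := key_sum k
  omega
end

section
/- Let v be the block matrix [[A, B], [0, C]] in M_{p+q}(\u2102), where A is p-by-p, B is p-by-q and C is q-by-q. If v is a partial isometry and both v\u1d34 v and v v\u1d34 are block diagonal (their off-diagonal blocks vanish), then A, B and C are each partial isometries, and moreover A\u1d34 B = 0 and B C\u1d34 = 0. -/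
open Matrix

/-- Let `v = [[A, B], [0, C]]` be a block upper triangular matrix.  If `v` is a partial
isometry and both `vᴴ v` and `v vᴴ` are block diagonal, then `A`, `B`, `C` are each partial
isometries, `Aᴴ B = 0` and `B Cᴴ = 0`. -/
theorem blocks_of_regular_partial_isometry {p q : ℕ}
    (A : Matrix (Fin p) (Fin p) ℂ) (B : Matrix (Fin p) (Fin q) ℂ)
    (C : Matrix (Fin q) (Fin q) ℂ)
    (v : Matrix (Fin p ⊕ Fin q) (Fin p ⊕ Fin q) ℂ)
    (hv : v = Matrix.fromBlocks A B 0 C)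
    (hpi : v * vᴴ * v = v)
    (h12 : Matrix.toBlocks₁₂ (vᴴ * v) = 0) (h21 : Matrix.toBlocks₂₁ (vᴴ * v) = 0)
    (h12' : Matrix.toBlocks₁₂ (v * vᴴ) = 0) (h21' : Matrix.toBlocks₂₁ (v * vᴴ) = 0) :
    A * Aᴴ * A = A ∧ B * Bᴴ * B = B ∧ C * Cᴴ * C = C ∧ Aᴴ * B = 0 ∧ B * Cᴴ = 0 := by
  subst hv
  simp only [fromBlocks_conjTranspose, conjTranspose_zero, fromBlocks_multiply,
    toBlocks_fromBlocks₁₂, toBlocks_fromBlocks₂₁, Matrix.mul_zero, Matrix.zero_mul,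
    add_zero, zero_add] at h12 h21 h12' h21' hpi
  -- h12 : Aᴴ * B = 0, h12' : B * Cᴴ = 0
  rw [fromBlocks_inj] at hpi
  obtain ⟨e11, e12, e21, e22⟩ := hpi
  have hBA : Bᴴ * A = 0 := h21
  rw [Matrix.add_mul, Matrix.mul_assoc B, hBA, Matrix.mul_zero, add_zero] at e11
  rw [Matrix.add_mul, Matrix.mul_assoc A, h12, Matrix.mul_zero, zero_add,
    Matrix.mul_assoc B Cᴴ, ← Matrix.mul_assoc B, h12', Matrix.zero_mul, add_zero] at e12
  rw [Matrix.mul_assoc C, ← Matrix.mul_assoc C Bᴴ, h21', Matrix.zero_mul, zero_add] at e22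
  exact ⟨e11, e12, e22, h12, h12'⟩
end

section
/- If u and v are partial isometries in M_n(\u2102) such that the product u v is also a partial isometry, then u\u1d34 u commutes with v v\u1d34. -/
open Matrix

/-- If `u` and `v` are partial isometries in `Mₙ(ℂ)` such that the product `u * v` is also a
partial isometry, then `uᴴ u` commutes with `v vᴴ`. -/
theorem commutes_of_mul_partial_isometry {n : ℕ}
    (u v : Matrix (Fin n) (Fin n) ℂ)
    (hu : u * uᴴ * u = u) (hv : v * vᴴ * v = v)
    (huv : (u * v) * (u * v)ᴴ * (u * v) = u * v) :
    (uᴴ * u) * (v * vᴴ) = (v * vᴴ) * (uᴴ * u) := by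
  set p := uᴴ * u with hp
  set q := v * vᴴ with hq
  have hpH : pᴴ = p := by simp [hp, Matrix.conjTranspose_mul]
  have hqH : qᴴ = q := by simp [hq, Matrix.conjTranspose_mul]
  have hpp : p * p = p := by
    have := congrArg (fun x => uᴴ * x) hu
    simpa [hp, Matrix.mul_assoc] using this
  have hqq : q * q = q := by
    have := congrArg (fun x => x * vᴴ) hv
    simpa [hq, Matrix.mul_assoc] using this
  have key : p * q * (p * q) = p * q := by
    have := congrArg (fun x => uᴴ * x * vᴴ) huv
    simp only [Matrix.conjTranspose_mul, Matrix.mul_assoc] at this ⊢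
    -- this : uᴴ * (u * (v * (vᴴ * (uᴴ * (u * v))))) * vᴴ ... need care
    calc p * (q * (p * q))
        = uᴴ * (u * (v * (vᴴ * (uᴴ * (u * (v * vᴴ)))))) := by
          simp only [hp, hq, Matrix.mul_assoc]
      _ = uᴴ * (u * (v * vᴴ)) := by
          have h2 : u * (v * (vᴴ * (uᴴ * (u * v)))) = u * v := by
            simpa [Matrix.mul_assoc] using huv
          have h3 := congrArg (fun x => x * vᴴ) h2
          simp only [Matrix.mul_assoc] at h3
          rw [h3]
      _ = p * q := by simp only [hp, hq, Matrix.mul_assoc]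
  -- a := p * q * p is an idempotent hermitian, and (pq - pqp)(pq - pqp)ᴴ = 0
  have hpqp : p * q = p * q * p := by
    have hz : (p * q - p * q * p) * (p * q - p * q * p)ᴴ = 0 := by
      have e1 : (p * q - p * q * p)ᴴ = q * p - p * q * p := by
        simp only [Matrix.conjTranspose_sub, Matrix.conjTranspose_mul, hpH, hqH,
          Matrix.mul_assoc]
      rw [e1]
      have a1 : p * q * (q * p) = p * q * p := by
        rw [Matrix.mul_assoc p q (q*p), ← Matrix.mul_assoc q q p, hqq, ← Matrix.mul_assoc]
      have a2 : p * q * (p * q * p) = p * q * p := by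
        rw [← Matrix.mul_assoc, key]
      have a3 : p * q * p * (q * p) = p * q * p := by
        have : p * q * p * (q * p) = p * q * (p * q) * p := by
          simp only [Matrix.mul_assoc]
        rw [this, key]
      have a4 : p * q * p * (p * q * p) = p * q * p := by
        have : p * q * p * (p * q * p) = p * q * (p * p) * (q * p) := by
          simp only [Matrix.mul_assoc]
        rw [this, hpp]
        exact a3
      rw [Matrix.sub_mul, Matrix.mul_sub, Matrix.mul_sub, a1, a2, a3, a4]
      simp
    open scoped ComplexOrder in
    have := Matrix.self_mul_conjTranspose_eq_zero.mp hz
    linear_combination (norm := module) this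
  have hherm : (p * q)ᴴ = p * q := by
    have h5 : (p * q * p)ᴴ = p * q * p := by
      simp only [Matrix.conjTranspose_mul, hpH, hqH, Matrix.mul_assoc]
    rw [hpqp, h5, ← hpqp]
  calc p * q = (p * q)ᴴ := hherm.symm
    _ = q * p := by simp [Matrix.conjTranspose_mul, hpH, hqH]
end

section
/- Let C in M_n(\u2102) be positive semidefinite with I - C positive semidefinite (a positive contraction). Then the 2n-by-2n block matrix P_C = [[C, \u221a(C(I-C))], [\u221a(C(I-C)), I - C]] is an orthogonal projection, where \u221a(C(I-C)) denotes the unique positive semidefinite square root of the positive semidefinite matrix C(I-C). -/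
/-!
Self-adjointness is immediate from `C` and `R` being Hermitian. Idempotency reduces blockwise to
`C² + R² = C` and `CR + R(1 - C) = R`, which follow from `R² = C(1 - C)` once `C` commutes with
`R`; and it does, since `C` commutes with `R² = C(1 - C)` and the positive square root `R` is a
continuous function of `R²`.
-/

open Matrix
open scoped ComplexOrder

theorem Commute.of_commute_mul_self_of_nonneg {A : Type*} [PartialOrder A] [Ring A] [StarRing A]
    [TopologicalSpace A] [StarOrderedRing A] [Algebra ℝ A]
    [ContinuousFunctionalCalculus ℝ A IsSelfAdjoint] [NonnegSpectrumClass ℝ A]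
    [IsTopologicalRing A] [T2Space A] {a b : A} (ha : 0 ≤ a) (h : Commute b (a * a)) :
    Commute b a := by
  rw [← CFC.sqrt_mul_self a ha, CFC.sqrt_eq_cfc]
  exact (h.symm.cfc_nnreal _).symm

theorem Matrix.isIdempotentElem_fromBlocks_of_mul_self_eq {α : Type*} [Ring α] {n : Type*}
    [Fintype n] [DecidableEq n] {C R : Matrix n n α} (hCR : Commute C R)
    (hR : R * R = C * (1 - C)) : IsIdempotentElem (fromBlocks C R R (1 - C)) := by
  have h₁₂ : C * R + R * (1 - C) = R := by rw [hCR.eq]; noncomm_ring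
  have h₂₁ : R * C + (1 - C) * R = R := by rw [← hCR.eq]; noncomm_ring
  rw [IsIdempotentElem, fromBlocks_multiply, hR, h₁₂, h₂₁]
  congr 1 <;> noncomm_ring

theorem fromBlocks_positive_contraction_isProjection_general {n : ℕ}
    (C : Matrix (Fin n) (Fin n) ℂ)
    (hC : C.PosSemidef)
    (R : Matrix (Fin n) (Fin n) ℂ)
    (hR : R.PosSemidef) (hR2 : R * R = C * ((1 : Matrix (Fin n) (Fin n) ℂ) - C)) :
    (Matrix.fromBlocks C R R ((1 : Matrix (Fin n) (Fin n) ℂ) - C))ᴴ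
        = Matrix.fromBlocks C R R ((1 : Matrix (Fin n) (Fin n) ℂ) - C) ∧
      Matrix.fromBlocks C R R ((1 : Matrix (Fin n) (Fin n) ℂ) - C) *
          Matrix.fromBlocks C R R ((1 : Matrix (Fin n) (Fin n) ℂ) - C)
        = Matrix.fromBlocks C R R ((1 : Matrix (Fin n) (Fin n) ℂ) - C) := by
  have hCR : Commute C R := open scoped MatrixOrder in
    .of_commute_mul_self_of_nonneg hR.nonneg <| hR2 ▸ (Commute.refl C).mul_right
      ((Commute.one_right C).sub_right (Commute.refl C))
  exact ⟨hC.1.fromBlocks hR.1 (isHermitian_one.sub hC.1),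
    isIdempotentElem_fromBlocks_of_mul_self_eq hCR hR2⟩

/-- Let `C` be a positive contraction in `Mₙ(ℂ)` (both `C` and `1 - C` positive semidefinite),
and let `R` be the (unique) positive semidefinite square root of `C * (1 - C)`.  Then the
`2n × 2n` block matrix `P_C = [[C, R], [R, 1 - C]]` is an orthogonal projection. -/
theorem fromBlocks_positive_contraction_isProjection {n : ℕ}
    (C : Matrix (Fin n) (Fin n) ℂ)
    (hC : C.PosSemidef) (hC' : ((1 : Matrix (Fin n) (Fin n) ℂ) - C).PosSemidef)
    (R : Matrix (Fin n) (Fin n) ℂ)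
    (hR : R.PosSemidef) (hR2 : R * R = C * ((1 : Matrix (Fin n) (Fin n) ℂ) - C)) :
    (Matrix.fromBlocks C R R ((1 : Matrix (Fin n) (Fin n) ℂ) - C))ᴴ
        = Matrix.fromBlocks C R R ((1 : Matrix (Fin n) (Fin n) ℂ) - C) ∧
      Matrix.fromBlocks C R R ((1 : Matrix (Fin n) (Fin n) ℂ) - C) *
          Matrix.fromBlocks C R R ((1 : Matrix (Fin n) (Fin n) ℂ) - C)
        = Matrix.fromBlocks C R R ((1 : Matrix (Fin n) (Fin n) ℂ) - C) :=
  fromBlocks_positive_contraction_isProjection_general C hC R hR hR2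
end

section
/- Let C in M_n(\u2102) and D in M_m(\u2102) be positive definite matrices such that I - C and I - D are also positive definite. Put P_C = [[C, \u221a(C(I-C))], [\u221a(C(I-C)), I-C]] in M_{2n}(\u2102), P_D = [[D, \u221a(D(I-D))], [\u221a(D(I-D)), I-D]] in M_{2m}(\u2102), and let P_n' = diag(I_n, 0) in M_{2n}(\u2102) and P_m' = diag(I_m, 0) in M_{2m}(\u2102). In M_{2n}(\u2102) \u2297 M_{2m}(\u2102) (Kronecker product, identified with M_{4nm}(\u2102)) set P = P_C \u2297 P_D + (I_{2n} - P_C) \u2297 P_m' and Q = P_n' \u2297 P_D + (I_{2n} - P_n') \u2297 P_m'. Then Q P Q is unitarily equivalent in M_{4nm}(\u2102) to the block diagonal matrix (I_2 \u2297 (I_{nm} - (I_n - C) \u2297 (I_m - D))) \u2295 0_{2nm}. -/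
open Matrix Kronecker
open scoped ComplexOrder

/-!
Since `√D` and `√(1-D)` commute and their product is the positive square root `√(D(1-D))`,
`V = [[√D, √(1-D)], [√(1-D), -√D]]` is a self-adjoint unitary with `V P_m' V = P_D`.
Expanding `Q P Q`, the terms mixing the two corners of `P_n'` cancel because
`P_C + (1 - P_C) = 1`; conjugating the rest by the symmetry `P_n' ⊗ V + (1 - P_n') ⊗ 1` leaves
`diag(C, C) ⊗ diag(1, 0) + diag(1-C, 1-C) ⊗ diag(D, 0)`, which after reordering the basis is
`1₂ ⊗ (C ⊗ 1 + (1 - C) ⊗ D) ⊕ 0`, and `C ⊗ 1 + (1 - C) ⊗ D = 1 - (1 - C) ⊗ (1 - D)`.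
-/

theorem CStarAlgebra.exists_sqrt_pair {A : Type*} [CStarAlgebra A] [PartialOrder A]
    [StarOrderedRing A] {d r : A} (hd : 0 ≤ d) (hd' : 0 ≤ 1 - d) (hr : 0 ≤ r)
    (hr2 : r * r = d * (1 - d)) :
    ∃ e f : A, IsSelfAdjoint e ∧ IsSelfAdjoint f ∧ e * e = d ∧ f * f = 1 - d ∧
      e * f = r ∧ f * e = r := by
  have hcomm : Commute (CFC.sqrt d) (CFC.sqrt (1 - d)) := by
    have h : Commute d (1 - d) := (Commute.one_right d).sub_right (Commute.refl d)
    rw [CFC.sqrt_eq_cfc, CFC.sqrt_eq_cfc]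
    exact ((h.cfc_nnreal _).symm.cfc_nnreal _).symm
  have hprod : CFC.sqrt d * CFC.sqrt (1 - d) = r := by
    rw [← CFC.mul_self_eq_mul_self_iff _ _
        (hcomm.mul_nonneg (CFC.sqrt_nonneg d) (CFC.sqrt_nonneg _)) hr,
      hr2, hcomm.symm.mul_mul_mul_comm, CFC.sqrt_mul_sqrt_self d, CFC.sqrt_mul_sqrt_self (1 - d)]
  exact ⟨_, _, (CFC.sqrt_nonneg d).isSelfAdjoint, (CFC.sqrt_nonneg (1 - d)).isSelfAdjoint,
    CFC.sqrt_mul_sqrt_self d, CFC.sqrt_mul_sqrt_self (1 - d), hprod, hcomm.eq ▸ hprod⟩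

namespace Matrix

section Blocks

variable {m R : Type*} [DecidableEq m]

theorem one_sub_fromBlocks [Ring R] (A B C D : Matrix m m R) :
    1 - fromBlocks A B C D = fromBlocks (1 - A) (-B) (-C) (1 - D) := by
  rw [← fromBlocks_one, sub_eq_add_neg, fromBlocks_neg, fromBlocks_add, sub_eq_add_neg,
    sub_eq_add_neg, zero_add, zero_add]

theorem one_sub_fromBlocks_one_zero [Ring R] :
    (1 - fromBlocks 1 0 0 0 : Matrix (m ⊕ m) (m ⊕ m) R) = fromBlocks 0 0 0 1 := by
  simp [one_sub_fromBlocks]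

variable [Fintype m]

theorem isIdempotentElem_fromBlocks_one_zero [Ring R] :
    IsIdempotentElem (fromBlocks 1 0 0 0 : Matrix (m ⊕ m) (m ⊕ m) R) := by
  simp [IsIdempotentElem, fromBlocks_multiply]

theorem fromBlocks_neg_mul_self [CommRing R] {E F : Matrix m m R} (hEF : E * F = F * E)
    (hsum : E * E + F * F = 1) :
    fromBlocks E F F (-E) * fromBlocks E F F (-E) = 1 := by
  rw [fromBlocks_multiply, neg_mul_neg, mul_neg, neg_mul, hEF, add_neg_cancel, add_comm (F * F),
    hsum, fromBlocks_one]

theorem fromBlocks_mul_fromBlocks_one_zero_mul [Ring R] (A B C D : Matrix m m R) :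
    fromBlocks A B C D * fromBlocks 1 0 0 0 * fromBlocks A B C D =
      fromBlocks (A * A) (A * B) (C * A) (C * B) := by
  simp [fromBlocks_multiply]

theorem fromBlocks_one_zero_mul_mul [Ring R] (A B C D : Matrix m m R) :
    fromBlocks 1 0 0 0 * fromBlocks A B C D * fromBlocks 1 0 0 0 = fromBlocks A 0 0 0 := by
  simp [fromBlocks_multiply]

theorem compress_fromBlocks_add_compress_one_sub [Ring R] (A B C D : Matrix m m R) :
    fromBlocks 1 0 0 0 * fromBlocks A B C D * fromBlocks 1 0 0 0 +
        fromBlocks 0 0 0 1 * (1 - fromBlocks A B C D) * fromBlocks 0 0 0 1 =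
      fromBlocks A 0 0 (1 - D) := by
  simp [one_sub_fromBlocks, fromBlocks_multiply, fromBlocks_add]

theorem compress_one_sub_fromBlocks_add_compress [Ring R] (A B C D : Matrix m m R) :
    fromBlocks 1 0 0 0 * (1 - fromBlocks A B C D) * fromBlocks 1 0 0 0 +
        fromBlocks 0 0 0 1 * fromBlocks A B C D * fromBlocks 0 0 0 1 =
      fromBlocks (1 - A) 0 0 D := by
  simp [one_sub_fromBlocks, fromBlocks_multiply, fromBlocks_add]

theorem exists_involution_conj_fromBlocks_one_zero {D R : Matrix m m ℂ} (hD : D.PosSemidef)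
    (hD' : (1 - D).PosSemidef) (hR : R.PosSemidef) (hR2 : R * R = D * (1 - D)) :
    ∃ V : Matrix (m ⊕ m) (m ⊕ m) ℂ, Vᴴ = V ∧ V * V = 1 ∧
      V * fromBlocks 1 0 0 0 * V = fromBlocks D R R (1 - D) := by
  open scoped MatrixOrder Matrix.Norms.L2Operator in
  obtain ⟨E, F, hE, hF, hEE, hFF, hEF, hFE⟩ :=
    CStarAlgebra.exists_sqrt_pair hD.nonneg hD'.nonneg hR.nonneg hR2
  refine ⟨fromBlocks E F F (-E), ?_, fromBlocks_neg_mul_self (hEF.trans hFE.symm) ?_, ?_⟩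
  · rw [fromBlocks_conjTranspose, conjTranspose_neg, show Eᴴ = E from hE, show Fᴴ = F from hF]
  · rw [hEE, hFF, add_sub_cancel]
  · rw [fromBlocks_mul_fromBlocks_one_zero_mul, hEE, hEF, hFE, hFF]

end Blocks

section Compression

variable {ι κ R : Type*} [Fintype ι] [Fintype κ] [DecidableEq ι] [DecidableEq κ] [CommRing R]

theorem kronecker_compression {a : Matrix ι ι R} (p : Matrix ι ι R) {f g : Matrix κ κ R}
    (ha : IsIdempotentElem a) (hf : IsIdempotentElem f) (hg : IsIdempotentElem g) :
    (a ⊗ₖ f + (1 - a) ⊗ₖ g) * (p ⊗ₖ f + (1 - p) ⊗ₖ g) * (a ⊗ₖ f + (1 - a) ⊗ₖ g) =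
      (a * p * a) ⊗ₖ f + (a * (1 - p) * a) ⊗ₖ (f * g * f) +
        ((1 - a) * p * (1 - a)) ⊗ₖ (g * f * g) + ((1 - a) * (1 - p) * (1 - a)) ⊗ₖ g := by
  have hf' : ∀ X : Matrix κ κ R, X * f * f = X * f := fun X => by rw [mul_assoc, hf.eq]
  have hg' : ∀ X : Matrix κ κ R, X * g * g = X * g := fun X => by rw [mul_assoc, hg.eq]
  -- the terms mixing `a` and `1 - a` recombine through `p + (1 - p) = 1` and then vanish
  have cross : ∀ x y : Matrix ι ι R, ∀ Z : Matrix κ κ R,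
      (x * p * y) ⊗ₖ Z + (x * (1 - p) * y) ⊗ₖ Z = (x * y) ⊗ₖ Z := fun x y Z => by
    rw [← add_kronecker, ← add_mul, ← mul_add, add_sub_cancel, mul_one]
  have hab := cross a (1 - a) (f * g)
  have hba := cross (1 - a) a (g * f)
  rw [ha.mul_one_sub_self, zero_kronecker] at hab
  rw [ha.one_sub_mul_self, zero_kronecker] at hba
  simp only [add_mul, mul_add, ← mul_kronecker_mul, hf.eq, hg.eq, hf', hg']
  linear_combination (norm := abel) hab + hba

theorem kronecker_add_kronecker_mul_corner_mul {a b : Matrix ι ι R}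
    {W : Matrix (ι × κ) (ι × κ) R} {V V' : Matrix κ κ R} (hW : W = a ⊗ₖ V + b ⊗ₖ V')
    (ha : IsIdempotentElem a) (hab : a * b = 0) (hba : b * a = 0) (x : Matrix ι ι R)
    (Y : Matrix κ κ R) :
    W * ((a * x * a) ⊗ₖ Y) * W = (a * x * a) ⊗ₖ (V * Y * V) := by
  have hl : a * (a * x * a) = a * x * a := by rw [← mul_assoc, ← mul_assoc, ha.eq]
  have hr : a * x * a * a = a * x * a := by rw [mul_assoc, ha.eq]
  have hbl : b * (a * x * a) = 0 := by rw [← mul_assoc, ← mul_assoc, hba, zero_mul, zero_mul]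
  have hbr : a * x * a * b = 0 := by rw [mul_assoc, hab, mul_zero]
  subst hW
  simp only [add_mul, mul_add, ← mul_kronecker_mul, hl, hr, hbl, hbr, zero_kronecker, add_zero]

theorem kronecker_add_one_sub_kronecker_one_mul_self {a : Matrix ι ι R} {V : Matrix κ κ R}
    (ha : IsIdempotentElem a) (hV : V * V = 1) :
    (a ⊗ₖ V + (1 - a) ⊗ₖ 1) * (a ⊗ₖ V + (1 - a) ⊗ₖ 1) = 1 := by
  simp only [add_mul, mul_add, ← mul_kronecker_mul, ha.eq, ha.one_sub.eq, ha.mul_one_sub_self,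
    ha.one_sub_mul_self, hV, mul_one, zero_kronecker, add_zero, zero_add]
  rw [← add_kronecker, add_sub_cancel, one_kronecker_one]

theorem conj_kronecker_compression {a : Matrix ι ι R} (p : Matrix ι ι R) {f g V : Matrix κ κ R}
    (ha : IsIdempotentElem a) (hg : IsIdempotentElem g) (hV : V * V = 1) (hVg : V * g * V = f) :
    (a ⊗ₖ V + (1 - a) ⊗ₖ 1) *
        ((a ⊗ₖ f + (1 - a) ⊗ₖ g) * (p ⊗ₖ f + (1 - p) ⊗ₖ g) * (a ⊗ₖ f + (1 - a) ⊗ₖ g)) *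
        (a ⊗ₖ V + (1 - a) ⊗ₖ 1) =
      (a * p * a + (1 - a) * (1 - p) * (1 - a)) ⊗ₖ g +
        (a * (1 - p) * a + (1 - a) * p * (1 - a)) ⊗ₖ (g * f * g) := by
  have hVV : ∀ X, V * (V * X) = X := fun X => by rw [← mul_assoc, hV, one_mul]
  have hgg : ∀ X, g * (g * X) = g * X := fun X => by rw [← mul_assoc, hg.eq]
  have hf : IsIdempotentElem f := by
    simp only [IsIdempotentElem, ← hVg, mul_assoc, hVV, hgg]
  have hVf : V * f * V = g := by simp only [← hVg, mul_assoc, hVV, hV, mul_one]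
  have hVfgf : V * (f * g * f) * V = g * f * g := by
    simp only [← hVg, mul_assoc, hVV, hV, mul_one]
  rw [kronecker_compression p ha hf hg]
  generalize hW : a ⊗ₖ V + (1 - a) ⊗ₖ 1 = W
  have hW' : W = (1 - a) ⊗ₖ 1 + a ⊗ₖ V := hW.symm.trans (add_comm _ _)
  simp only [mul_add, add_mul]
  rw [kronecker_add_kronecker_mul_corner_mul hW.symm ha ha.mul_one_sub_self ha.one_sub_mul_self,
    kronecker_add_kronecker_mul_corner_mul hW.symm ha ha.mul_one_sub_self ha.one_sub_mul_self,
    kronecker_add_kronecker_mul_corner_mul hW' ha.one_sub ha.one_sub_mul_self ha.mul_one_sub_self,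
    kronecker_add_kronecker_mul_corner_mul hW' ha.one_sub ha.one_sub_mul_self ha.mul_one_sub_self,
    hVf, hVfgf, one_mul, mul_one, one_mul, mul_one, add_kronecker, add_kronecker]
  abel

end Compression

theorem one_sub_kronecker_one_sub {ι κ R : Type*} [DecidableEq ι] [DecidableEq κ] [CommRing R]
    (A : Matrix ι ι R) (B : Matrix κ κ R) :
    1 - (1 - A) ⊗ₖ (1 - B) = A ⊗ₖ 1 + (1 - A) ⊗ₖ B := by
  rw [sub_eq_iff_eq_add, add_assoc, ← kronecker_add, add_sub_cancel, ← add_kronecker,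
    add_sub_cancel, one_kronecker_one]

theorem exists_unitary_conj_eq_submatrix {ι κ R : Type*} [Fintype ι] [Fintype κ]
    [DecidableEq ι] [DecidableEq κ] [CommRing R] [StarRing R] (e : κ ≃ ι)
    {W : Matrix ι ι R} (hWH : Wᴴ = W) (hW : W * W = 1) (X : Matrix ι ι R) :
    ∃ U : Matrix κ ι R, U * Uᴴ = 1 ∧ Uᴴ * U = 1 ∧ U * X * Uᴴ = (W * X * W).submatrix e e := by
  refine ⟨W.submatrix e id, ?_, ?_, ?_⟩ <;> rw [conjTranspose_submatrix, hWH]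
  · rw [← submatrix_mul _ _ _ _ _ Function.bijective_id, hW, submatrix_one_equiv]
  · rw [← submatrix_mul _ _ _ _ _ e.bijective, hW, submatrix_id_id]
  · rw [← submatrix_id_id X, ← submatrix_mul _ _ _ _ _ Function.bijective_id,
      ← submatrix_mul _ _ _ _ _ Function.bijective_id, submatrix_id_id]

def blockIndexEquiv (α β : Type*) :
    (Fin 2 × (α × β)) ⊕ (Fin 2 × (α × β)) ≃ (α ⊕ α) × (β ⊕ β) where
  toFun
    | .inl (k, i, j) => (if k = 0 then .inl i else .inr i, .inl j)
    | .inr (k, i, j) => (if k = 0 then .inl i else .inr i, .inr j)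
  invFun
    | (.inl i, .inl j) => .inl (0, i, j)
    | (.inr i, .inl j) => .inl (1, i, j)
    | (.inl i, .inr j) => .inr (0, i, j)
    | (.inr i, .inr j) => .inr (1, i, j)
  left_inv := by rintro (⟨k, i, j⟩ | ⟨k, i, j⟩) <;> fin_cases k <;> simp
  right_inv := by rintro ⟨i | i, j | j⟩ <;> simp

theorem submatrix_blockIndexEquiv {α β R : Type*} [DecidableEq α] [CommRing R]
    (X : Matrix α α R) (Y : Matrix β β R) :
    (fromBlocks X 0 0 X ⊗ₖ fromBlocks Y 0 0 0).submatrix (blockIndexEquiv α β)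
        (blockIndexEquiv α β) =
      fromBlocks ((1 : Matrix (Fin 2) (Fin 2) R) ⊗ₖ (X ⊗ₖ Y)) 0 0 0 := by
  ext (⟨k, i, j⟩ | ⟨k, i, j⟩) (⟨k', i', j'⟩ | ⟨k', i', j'⟩) <;> fin_cases k <;> fin_cases k' <;>
    simp [blockIndexEquiv]

end Matrix

theorem compression_product_unitarily_equivalent_general {n m : ℕ}
    (C : Matrix (Fin n) (Fin n) ℂ) (D : Matrix (Fin m) (Fin m) ℂ)
    (hD : D.PosDef) (hD' : ((1 : Matrix (Fin m) (Fin m) ℂ) - D).PosDef)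
    (RC : Matrix (Fin n) (Fin n) ℂ)
    (RD : Matrix (Fin m) (Fin m) ℂ) (hRD : RD.PosSemidef)
    (hRD2 : RD * RD = D * ((1 : Matrix (Fin m) (Fin m) ℂ) - D))
    (PC : Matrix (Fin n ⊕ Fin n) (Fin n ⊕ Fin n) ℂ)
    (hPC : PC = Matrix.fromBlocks C RC RC ((1 : Matrix (Fin n) (Fin n) ℂ) - C))
    (PD : Matrix (Fin m ⊕ Fin m) (Fin m ⊕ Fin m) ℂ)
    (hPD : PD = Matrix.fromBlocks D RD RD ((1 : Matrix (Fin m) (Fin m) ℂ) - D))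
    (Pn' : Matrix (Fin n ⊕ Fin n) (Fin n ⊕ Fin n) ℂ)
    (hPn' : Pn' = Matrix.fromBlocks (1 : Matrix (Fin n) (Fin n) ℂ) 0 0 0)
    (Pm' : Matrix (Fin m ⊕ Fin m) (Fin m ⊕ Fin m) ℂ)
    (hPm' : Pm' = Matrix.fromBlocks (1 : Matrix (Fin m) (Fin m) ℂ) 0 0 0)
    (P Q : Matrix ((Fin n ⊕ Fin n) × (Fin m ⊕ Fin m)) ((Fin n ⊕ Fin n) × (Fin m ⊕ Fin m)) ℂ)
    (hP : P = PC ⊗ₖ PD + (1 - PC) ⊗ₖ Pm')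
    (hQ : Q = Pn' ⊗ₖ PD + (1 - Pn') ⊗ₖ Pm') :
    ∃ U : Matrix ((Fin 2 × (Fin n × Fin m)) ⊕ (Fin 2 × (Fin n × Fin m)))
        ((Fin n ⊕ Fin n) × (Fin m ⊕ Fin m)) ℂ,
      U * Uᴴ = 1 ∧ Uᴴ * U = 1 ∧
      U * (Q * P * Q) * Uᴴ =
        Matrix.fromBlocks
          ((1 : Matrix (Fin 2) (Fin 2) ℂ) ⊗ₖ
            ((1 : Matrix (Fin n × Fin m) (Fin n × Fin m) ℂ) -
              ((1 : Matrix (Fin n) (Fin n) ℂ) - C) ⊗ₖ ((1 : Matrix (Fin m) (Fin m) ℂ) - D)))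
          0 0 0 := by
  subst hPC hPD hPm'
  obtain ⟨V, hVH, hVV, hVg⟩ :=
    exists_involution_conj_fromBlocks_one_zero hD.posSemidef hD'.posSemidef hRD hRD2
  have hPn'H : Pn'ᴴ = Pn' := by simp [hPn', fromBlocks_conjTranspose]
  have hPn'idem : IsIdempotentElem Pn' := hPn' ▸ isIdempotentElem_fromBlocks_one_zero
  have hWH : (Pn' ⊗ₖ V + (1 - Pn') ⊗ₖ 1)ᴴ = Pn' ⊗ₖ V + (1 - Pn') ⊗ₖ 1 := by
    simp [conjTranspose_kronecker, hPn'H, hVH]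
  obtain ⟨U, hU, hU', hUX⟩ := exists_unitary_conj_eq_submatrix (blockIndexEquiv (Fin n) (Fin m))
    hWH (kronecker_add_one_sub_kronecker_one_mul_self hPn'idem hVV) (Q * P * Q)
  refine ⟨U, hU, hU', ?_⟩
  rw [hUX, hP, hQ,
    conj_kronecker_compression _ hPn'idem isIdempotentElem_fromBlocks_one_zero hVV hVg, hPn',
    one_sub_fromBlocks_one_zero, compress_fromBlocks_add_compress_one_sub,
    compress_one_sub_fromBlocks_add_compress, sub_sub_cancel, fromBlocks_one_zero_mul_mul,
    submatrix_add, Pi.add_apply, Pi.add_apply, submatrix_blockIndexEquiv,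
    submatrix_blockIndexEquiv, fromBlocks_add, ← kronecker_add, one_sub_kronecker_one_sub, add_zero]

/-- Let `C ∈ Mₙ(ℂ)` and `D ∈ Mₘ(ℂ)` be positive definite with `1 - C` and `1 - D` positive
definite, and let `RC`, `RD` be the positive semidefinite square roots of `C(1-C)` and
`D(1-D)`.  Form the projections `P_C = [[C, RC], [RC, 1-C]]`, `P_D = [[D, RD], [RD, 1-D]]`,
`Pₙ' = diag(1, 0)`, `Pₘ' = diag(1, 0)`, and in the Kronecker product set
`P = P_C ⊗ P_D + (1 - P_C) ⊗ Pₘ'` and `Q = Pₙ' ⊗ P_D + (1 - Pₙ') ⊗ Pₘ'`.  Then `Q P Q` is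
unitarily equivalent to the block diagonal matrix
`(1₂ ⊗ (1 - (1 - C) ⊗ (1 - D))) ⊕ 0`. -/
theorem compression_product_unitarily_equivalent {n m : ℕ}
    (C : Matrix (Fin n) (Fin n) ℂ) (D : Matrix (Fin m) (Fin m) ℂ)
    (hC : C.PosDef) (hC' : ((1 : Matrix (Fin n) (Fin n) ℂ) - C).PosDef)
    (hD : D.PosDef) (hD' : ((1 : Matrix (Fin m) (Fin m) ℂ) - D).PosDef)
    (RC : Matrix (Fin n) (Fin n) ℂ) (hRC : RC.PosSemidef)
    (hRC2 : RC * RC = C * ((1 : Matrix (Fin n) (Fin n) ℂ) - C))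
    (RD : Matrix (Fin m) (Fin m) ℂ) (hRD : RD.PosSemidef)
    (hRD2 : RD * RD = D * ((1 : Matrix (Fin m) (Fin m) ℂ) - D))
    (PC : Matrix (Fin n ⊕ Fin n) (Fin n ⊕ Fin n) ℂ)
    (hPC : PC = Matrix.fromBlocks C RC RC ((1 : Matrix (Fin n) (Fin n) ℂ) - C))
    (PD : Matrix (Fin m ⊕ Fin m) (Fin m ⊕ Fin m) ℂ)
    (hPD : PD = Matrix.fromBlocks D RD RD ((1 : Matrix (Fin m) (Fin m) ℂ) - D))
    (Pn' : Matrix (Fin n ⊕ Fin n) (Fin n ⊕ Fin n) ℂ)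
    (hPn' : Pn' = Matrix.fromBlocks (1 : Matrix (Fin n) (Fin n) ℂ) 0 0 0)
    (Pm' : Matrix (Fin m ⊕ Fin m) (Fin m ⊕ Fin m) ℂ)
    (hPm' : Pm' = Matrix.fromBlocks (1 : Matrix (Fin m) (Fin m) ℂ) 0 0 0)
    (P Q : Matrix ((Fin n ⊕ Fin n) × (Fin m ⊕ Fin m)) ((Fin n ⊕ Fin n) × (Fin m ⊕ Fin m)) ℂ)
    (hP : P = PC ⊗ₖ PD + (1 - PC) ⊗ₖ Pm')
    (hQ : Q = Pn' ⊗ₖ PD + (1 - Pn') ⊗ₖ Pm') :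
    ∃ U : Matrix ((Fin 2 × (Fin n × Fin m)) ⊕ (Fin 2 × (Fin n × Fin m)))
        ((Fin n ⊕ Fin n) × (Fin m ⊕ Fin m)) ℂ,
      U * Uᴴ = 1 ∧ Uᴴ * U = 1 ∧
      U * (Q * P * Q) * Uᴴ =
        Matrix.fromBlocks
          ((1 : Matrix (Fin 2) (Fin 2) ℂ) ⊗ₖ
            ((1 : Matrix (Fin n × Fin m) (Fin n × Fin m) ℂ) -
              ((1 : Matrix (Fin n) (Fin n) ℂ) - C) ⊗ₖ ((1 : Matrix (Fin m) (Fin m) ℂ) - D)))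
          0 0 0 :=
  compression_product_unitarily_equivalent_general C D hD hD' RC RD hRD hRD2 PC hPC PD hPD Pn' hPn'
    Pm' hPm' P Q hP hQ
end

section
/- Let n \u2265 1, let w be a primitive n-th root of unity in \u2102, let U in M_n(\u2102) be the Fourier matrix with (k, l) entry w^{k l} / \u221an, let \u016a be its entrywise complex conjugate, and let S be the cyclic shift matrix with (k, l) entry 1 if k \u2261 l + 1 (mod n) and 0 otherwise. Then for all i, j in {0, ..., n-1}, the following identity holds in the triple Kronecker product M_n(\u2102) \u2297 M_n(\u2102) \u2297 M_n(\u2102): \sum_{k,l} (w^{(k+i)(l+j)} / \u221an) \u00b7 ((S\u1d34)^k \u016a S^l) \u2297 E_{kl} \u2297 E_{ij} = \sum_{s,t} E_{st} \u2297 (w^{i j - s t} \u00b7 Y_{j-t, i-s}) \u2297 E_{ij}, where for integers a, b, Y_{a,b} in M_n(\u2102) has (k, l) entry w^{a k + b l} / n, the exponent i j - s t is an integer power, and E_{pq} denotes the standard matrix unit. -/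
/-!
Conjugating by powers of the cyclic shift translates indices, `(Sᴴ^k * Ū * S^l) p q = Ū (p+k) (q+l)`,
so the `((p,k),(q,l))` block entry of the left side is `w^((k+i)(l+j) - (p+k)(q+l)) / n`: here
`conj w = w⁻¹` and `w^n = 1` let the reductions mod `n` of `p+k` and `q+l` be dropped. Expanded,
that exponent is `ij - pq + (j-q)k + (i-p)l`, the exponent of the same entry on the right side.
-/

open Matrix Kronecker
open Fin.NatCast

namespace Matrix

variable {α ι κ l m n p : Type*}

theorem sum_kronecker [NonUnitalNonAssocSemiring α] (s : Finset ι) (A : ι → Matrix l m α)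
    (B : Matrix n p α) : (∑ x ∈ s, A x) ⊗ₖ B = ∑ x ∈ s, A x ⊗ₖ B := by
  ext
  simp [sum_apply, Finset.sum_mul]

variable [Fintype ι] [DecidableEq ι] [Fintype κ] [DecidableEq κ]

theorem sum_sum_kronecker_single_apply [Semiring α] (A : ι → κ → Matrix m n α)
    (x : m) (y : n) (k : ι) (l : κ) :
    (∑ k', ∑ l', A k' l' ⊗ₖ single k' l' (1 : α)) (x, k) (y, l) = A k l x y := by
  simp [sum_apply, single_apply, ite_and]

theorem sum_sum_single_kronecker_apply [Semiring α] (B : ι → κ → Matrix m n α)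
    (s : ι) (t : κ) (x : m) (y : n) :
    (∑ s', ∑ t', single s' t' (1 : α) ⊗ₖ B s' t') (s, x) (t, y) = B s t x y := by
  simp [sum_apply, single_apply, ite_and]

end Matrix

section Shift

variable {R : Type*} [Semiring R] {n : ℕ} [NeZero n] {S : Matrix (Fin n) (Fin n) R}

theorem shift_pow_apply (hS : ∀ k l, S k l = if k = l + 1 then 1 else 0) (m : ℕ) (k l : Fin n) :
    (S ^ m) k l = if k = l + m then 1 else 0 := by
  induction m generalizing k l with
  | zero => simp [one_apply]
  | succ m ih =>
    simp [pow_succ, mul_apply, ih, hS, add_assoc, add_comm (1 : Fin n)]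

theorem conjTranspose_shift_pow_apply [StarRing R] (hS : ∀ k l, S k l = if k = l + 1 then 1 else 0)
    (m : ℕ) (k l : Fin n) : (Sᴴ ^ m) k l = if l = k + m then 1 else 0 := by
  rw [← conjTranspose_pow, conjTranspose_apply, shift_pow_apply hS]
  split_ifs <;> simp

theorem conjTranspose_shift_pow_mul_mul_shift_pow_apply [StarRing R]
    (hS : ∀ k l, S k l = if k = l + 1 then 1 else 0) (A : Matrix (Fin n) (Fin n) R)
    (k l : ℕ) (p q : Fin n) : (Sᴴ ^ k * A * S ^ l) p q = A (p + k) (q + l) := by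
  simp [mul_apply, shift_pow_apply hS, conjTranspose_shift_pow_apply hS]

end Shift

theorem zpow_eq_zpow_of_pow_eq_one_of_modEq {G₀ : Type*} [GroupWithZero G₀] {w : G₀} {n : ℕ}
    (hw : w ^ n = 1) {a b : ℤ} (h : a ≡ b [ZMOD n]) : w ^ a = w ^ b := by
  rcases eq_or_ne n 0 with rfl | hn
  · rw [Nat.cast_zero, Int.modEq_zero_iff] at h
    rw [h]
  · have hw0 : w ≠ 0 := by
      rintro rfl
      simp [zero_pow hn] at hw
    obtain ⟨c, hc⟩ := h.dvd
    rw [show b = a + n * c by omega, zpow_add₀ hw0, _root_.zpow_mul, zpow_natCast, hw,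
      _root_.one_zpow, mul_one]

theorem conj_pow_val_add_mul_val_add {n : ℕ} [NeZero n] {w : ℂ} (hw : w ^ n = 1)
    (p k q l : Fin n) :
    starRingEnd ℂ (w ^ (((p + k : Fin n) : ℕ) * ((q + l : Fin n) : ℕ))) =
      w ^ (-(((p : ℤ) + k) * ((q : ℤ) + l))) := by
  have hconj : starRingEnd ℂ w = w⁻¹ :=
    (Complex.inv_eq_conj (Complex.norm_eq_one_of_pow_eq_one hw (NeZero.ne n))).symm
  rw [map_pow, hconj, inv_pow, ← zpow_natCast, ← _root_.zpow_neg]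
  refine zpow_eq_zpow_of_pow_eq_one_of_modEq hw (Int.ModEq.neg ?_)
  push_cast [Fin.val_add]
  exact (Int.mod_modEq _ _).mul (Int.mod_modEq _ _)

theorem bipartite_shift_factorisation_identity_general {n : ℕ} (w : ℂ)
    (hw : IsPrimitiveRoot w n)
    (U : Matrix (Fin n) (Fin n) ℂ)
    (hU : ∀ k l : Fin n, U k l = w ^ ((k : ℕ) * (l : ℕ)) / (Real.sqrt n : ℂ))
    (Ubar : Matrix (Fin n) (Fin n) ℂ)
    (hUbar : ∀ k l : Fin n, Ubar k l = (starRingEnd ℂ) (U k l))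
    (S : Matrix (Fin n) (Fin n) ℂ)
    (hS : ∀ k l : Fin n, S k l = if (k : ℕ) = ((l : ℕ) + 1) % n then 1 else 0)
    (Y : ℤ → ℤ → Matrix (Fin n) (Fin n) ℂ)
    (hY : ∀ (a b : ℤ) (k l : Fin n), Y a b k l = w ^ (a * (k : ℕ) + b * (l : ℕ)) / (n : ℂ))
    (i j : Fin n) :
    ∑ k : Fin n, ∑ l : Fin n,
        (w ^ (((k : ℕ) + (i : ℕ)) * ((l : ℕ) + (j : ℕ))) / (Real.sqrt n : ℂ)) •
          ((((Sᴴ) ^ (k : ℕ) * Ubar * S ^ (l : ℕ)) ⊗ₖ Matrix.single k l (1 : ℂ)) ⊗ₖ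
            Matrix.single i j (1 : ℂ))
      = ∑ s : Fin n, ∑ t : Fin n,
          ((Matrix.single s t (1 : ℂ)) ⊗ₖ
              (w ^ ((i : ℤ) * (j : ℤ) - (s : ℤ) * (t : ℤ)) •
                Y ((j : ℤ) - (t : ℤ)) ((i : ℤ) - (s : ℤ)))) ⊗ₖ
            Matrix.single i j (1 : ℂ) := by
  have : NeZero n := NeZero.of_pos i.pos
  have hw0 : w ≠ 0 := hw.ne_zero (NeZero.ne n)
  have hS' : ∀ k l : Fin n, S k l = if k = l + 1 then 1 else 0 := fun k l => by
    simp only [hS, Fin.ext_iff, Fin.val_add, Fin.val_one', Nat.add_mod_mod]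
  have hsqrt : (Real.sqrt n : ℂ) * Real.sqrt n = n := by
    rw [← Complex.ofReal_mul, Real.mul_self_sqrt n.cast_nonneg, Complex.ofReal_natCast]
  simp only [← smul_kronecker, ← sum_kronecker]
  congr 1
  ext ⟨p, k⟩ ⟨q, l⟩
  rw [sum_sum_kronecker_single_apply, sum_sum_single_kronecker_apply, Matrix.smul_apply,
    Matrix.smul_apply, smul_eq_mul, smul_eq_mul, hY,
    conjTranspose_shift_pow_mul_mul_shift_pow_apply hS', Fin.cast_val_eq_self,
    Fin.cast_val_eq_self, hUbar, hU, map_div₀, conj_pow_val_add_mul_val_add hw.pow_eq_one,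
    Complex.conj_ofReal, div_mul_div_comm, hsqrt, mul_div_assoc', ← zpow_natCast,
    ← zpow_add₀ hw0, ← zpow_add₀ hw0]
  congr 2
  push_cast
  ring

/-- The computational core of the irregular factorisation of the shift embedding for complete
bipartite digraph algebras: for a primitive `n`-th root of unity `w`, the Fourier matrix `U`,
its entrywise conjugate `Ū`, the cyclic shift `S`, and the rank-one partial isometries
`Y a b` with entries `w^(a k + b l) / n`, one has, for all `i, j`,
`∑_{k,l} (w^((k+i)(l+j))/√n) • (((Sᴴ)^k * Ū * S^l) ⊗ E_{kl}) ⊗ E_{ij}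
  = ∑_{s,t} (E_{st} ⊗ (w^(ij - st) • Y (j-t) (i-s))) ⊗ E_{ij}`. -/
theorem bipartite_shift_factorisation_identity {n : ℕ} (hn : 1 ≤ n) (w : ℂ)
    (hw : IsPrimitiveRoot w n)
    (U : Matrix (Fin n) (Fin n) ℂ)
    (hU : ∀ k l : Fin n, U k l = w ^ ((k : ℕ) * (l : ℕ)) / (Real.sqrt n : ℂ))
    (Ubar : Matrix (Fin n) (Fin n) ℂ)
    (hUbar : ∀ k l : Fin n, Ubar k l = (starRingEnd ℂ) (U k l))
    (S : Matrix (Fin n) (Fin n) ℂ)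
    (hS : ∀ k l : Fin n, S k l = if (k : ℕ) = ((l : ℕ) + 1) % n then 1 else 0)
    (Y : ℤ → ℤ → Matrix (Fin n) (Fin n) ℂ)
    (hY : ∀ (a b : ℤ) (k l : Fin n), Y a b k l = w ^ (a * (k : ℕ) + b * (l : ℕ)) / (n : ℂ))
    (i j : Fin n) :
    ∑ k : Fin n, ∑ l : Fin n,
        (w ^ (((k : ℕ) + (i : ℕ)) * ((l : ℕ) + (j : ℕ))) / (Real.sqrt n : ℂ)) •
          ((((Sᴴ) ^ (k : ℕ) * Ubar * S ^ (l : ℕ)) ⊗ₖ Matrix.single k l (1 : ℂ)) ⊗ₖ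
            Matrix.single i j (1 : ℂ))
      = ∑ s : Fin n, ∑ t : Fin n,
          ((Matrix.single s t (1 : ℂ)) ⊗ₖ
              (w ^ ((i : ℤ) * (j : ℤ) - (s : ℤ) * (t : ℤ)) •
                Y ((j : ℤ) - (t : ℤ)) ((i : ℤ) - (s : ℤ)))) ⊗ₖ
            Matrix.single i j (1 : ℂ) :=
  bipartite_shift_factorisation_identity_general w hw U hU Ubar hUbar S hS Y hY i j
end

section
/- Let n \u2265 1 and let P_n in M_n(\u2102) be the matrix all of whose entries equal 1/n (a rank-one orthogonal projection). Then for every partial isometry v in M_n(\u2102) whose diagonal entries are all zero, the operator norm satisfies \u2016P_n - v\u2016 \u2265 1/3. -/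
/-!
Transport everything to operators on `ℂⁿ`: `Pₙ` becomes the rank-one projection onto the unit
vector `ξ = (1, …, 1)/√n`, and `v` a partial isometry `A` of trace zero. If `t = ‖Pₙ - A‖ < 1`,
then `A` is strictly contractive on `ξ^⊥`, while it is isometric on its initial space
`ran (A⋆A)`; hence `ran (A⋆A)` meets `ξ^⊥` trivially and `A` has rank one. A rank-one operator
of trace zero squares to zero, so `Aξ ⊥ A⋆ξ`. Both vectors lie within `t` of `ξ`, and for
orthogonal `a, b` one has `‖ξ - a‖² + ‖ξ - b‖² = 1 + ‖ξ - (a + b)‖² ≥ 1`, whence `2t² ≥ 1`.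
-/

open InnerProductSpace ContinuousLinearMap
open scoped InnerProductSpace

section InnerProductSpace

variable {𝕜 E : Type*} [RCLike 𝕜] [NormedAddCommGroup E] [InnerProductSpace 𝕜 E]

theorem one_le_norm_sub_sq_add_norm_sub_sq {ξ a b : E} (hξ : ‖ξ‖ = 1) (hab : ⟪a, b⟫_𝕜 = 0) :
    1 ≤ ‖ξ - a‖ ^ 2 + ‖ξ - b‖ ^ 2 := by
  have pythagoras := norm_add_sq_eq_norm_sq_add_norm_sq_of_inner_eq_zero a b hab
  have key : ‖ξ - a‖ ^ 2 + ‖ξ - b‖ ^ 2 = ‖ξ‖ ^ 2 + ‖ξ - (a + b)‖ ^ 2 := by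
    rw [@norm_sub_sq 𝕜, @norm_sub_sq 𝕜, @norm_sub_sq 𝕜, inner_add_right, map_add]
    linear_combination -pythagoras
  rw [key, hξ, one_pow]
  exact le_add_of_nonneg_right (sq_nonneg _)

theorem rankOne_mul_rankOne_self [FiniteDimensional 𝕜 E] (a b : E) :
    rankOne 𝕜 a b * rankOne 𝕜 a b = LinearMap.trace 𝕜 E (rankOne 𝕜 a b) • rankOne 𝕜 a b := by
  rw [trace_rankOne, mul_def, rankOne_comp_rankOne]

variable [CompleteSpace E]

theorem isStarProjection_star_mul_self_of_mul_star_mul {A : E →L[𝕜] E}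
    (hA : A * star A * A = A) : IsStarProjection (star A * A) where
  isIdempotentElem := by rw [IsIdempotentElem, mul_assoc, ← mul_assoc A, hA]
  isSelfAdjoint := .star_mul_self A

theorem norm_apply_eq_norm_star_mul_self_apply {A : E →L[𝕜] E}
    (hA : A * star A * A = A) (x : E) : ‖A x‖ = ‖(star A * A) x‖ := by
  rw [← sq_eq_sq₀ (norm_nonneg _) (norm_nonneg _), ← inner_self_eq_norm_sq (𝕜 := 𝕜),
    ← inner_self_eq_norm_sq (𝕜 := 𝕜)]
  congr 1
  rw [mul_apply_eq_comp _ _ x, star_eq_adjoint, adjoint_inner_left, ← mul_apply_eq_comp,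
    ← mul_apply_eq_comp, ← star_eq_adjoint, hA]

theorem IsStarProjection.eq_rankOne_of_forall_inner_eq_zero {Q : E →L[𝕜] E}
    (hQ : IsStarProjection Q) {ξ : E} (h : ∀ z, Q z = z → ⟪ξ, z⟫_𝕜 = 0 → z = 0) :
    Q = rankOne 𝕜 ((⟪Q ξ, Q ξ⟫_𝕜)⁻¹ • Q ξ) (Q ξ) := by
  have hsymm : ∀ y z, ⟪Q y, z⟫_𝕜 = ⟪y, Q z⟫_𝕜 :=
    isSelfAdjoint_iff_isSymmetric.mp hQ.isSelfAdjoint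
  have hidem : ∀ y, Q (Q y) = Q y := fun y => by
    rw [← mul_apply_eq_comp, hQ.isIdempotentElem.eq]
  ext x
  set u := Q ξ
  set c := ⟪u, x⟫_𝕜 / ⟪u, u⟫_𝕜
  have hξu : ⟪ξ, u⟫_𝕜 = ⟪u, u⟫_𝕜 := by rw [hsymm, hidem]
  have hux : ⟪u, u⟫_𝕜 = 0 → ⟪u, x⟫_𝕜 = 0 := fun hu => by
    rw [inner_self_eq_zero.mp hu, inner_zero_left]
  have hx : Q x - c • u = 0 := by
    refine h _ (by simp only [map_sub, map_smul, hidem, u]) ?_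
    rw [inner_sub_right, inner_smul_right, ← hsymm, hξu, div_mul_cancel_of_imp hux, sub_self]
  rw [rankOne_apply, smul_smul, ← div_eq_mul_inv, ← sub_eq_zero.mp hx]

theorem exists_eq_rankOne_of_norm_apply_lt {A : E →L[𝕜] E} (hA : A * star A * A = A) {ξ : E}
    (hξ : ∀ x ≠ 0, ⟪ξ, x⟫_𝕜 = 0 → ‖A x‖ < ‖x‖) :
    ∃ a b : E, A = rankOne 𝕜 a b := by
  have hQ := isStarProjection_star_mul_self_of_mul_star_mul hA
  have hrank := hQ.eq_rankOne_of_forall_inner_eq_zero (ξ := ξ) fun z hz hξz => by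
    by_contra hz0
    have := hξ z hz0 hξz
    rw [norm_apply_eq_norm_star_mul_self_apply hA, hz] at this
    exact this.false
  have hAQ : A = A * (star A * A) := by rw [← mul_assoc, hA]
  exact ⟨_, _, hAQ.trans (by rw [hrank, mul_def, comp_rankOne])⟩

theorem mul_self_eq_zero_of_trace_eq_zero [FiniteDimensional 𝕜 E] {A : E →L[𝕜] E}
    (hA : A * star A * A = A) (htr : LinearMap.trace 𝕜 E A = 0) {ξ : E}
    (hξ : ∀ x ≠ 0, ⟪ξ, x⟫_𝕜 = 0 → ‖A x‖ < ‖x‖) : A * A = 0 := by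
  obtain ⟨a, b, rfl⟩ := exists_eq_rankOne_of_norm_apply_lt hA hξ
  rw [rankOne_mul_rankOne_self, htr, zero_smul]

theorem one_le_two_mul_norm_rankOne_self_sub_sq [FiniteDimensional 𝕜 E] {ξ : E} (hξ : ‖ξ‖ = 1)
    {A : E →L[𝕜] E} (hA : A * star A * A = A) (htr : LinearMap.trace 𝕜 E A = 0) :
    1 ≤ 2 * ‖rankOne 𝕜 ξ ξ - A‖ ^ 2 := by
  set t := ‖rankOne 𝕜 ξ ξ - A‖
  have hPξ : rankOne 𝕜 ξ ξ ξ = ξ := by simp [inner_self_eq_norm_sq_to_K, hξ]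
  rcases le_or_gt 1 t with ht | ht
  · nlinarith
  have hsq : A * A = 0 := mul_self_eq_zero_of_trace_eq_zero hA htr (ξ := ξ) fun x hx hξx =>
    calc ‖A x‖ = ‖(rankOne 𝕜 ξ ξ - A) x‖ := by simp [hξx]
      _ ≤ t * ‖x‖ := le_opNorm _ _
      _ < ‖x‖ := mul_lt_of_lt_one_left (norm_pos_iff.mpr hx) ht
  have horth : ⟪A ξ, star A ξ⟫_𝕜 = 0 := by
    rw [star_eq_adjoint, adjoint_inner_right, ← mul_apply_eq_comp, hsq, zero_apply,
      inner_zero_left]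
  have hnear : ‖ξ - A ξ‖ ≤ t := by
    simpa [hPξ, hξ] using le_opNorm (rankOne 𝕜 ξ ξ - A) ξ
  have hnear' : ‖ξ - star A ξ‖ ≤ t := by
    have hP : star (rankOne 𝕜 ξ ξ) = rankOne 𝕜 ξ ξ :=
      (isStarProjection_rankOne_self hξ).isSelfAdjoint.star_eq
    have h := le_opNorm (adjoint (rankOne 𝕜 ξ ξ - A)) ξ
    rw [adjoint.norm_map, map_sub, ← star_eq_adjoint, ← star_eq_adjoint, hP] at h
    simpa [hPξ, hξ] using h
  have := one_le_norm_sub_sq_add_norm_sub_sq hξ horth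
  nlinarith [pow_le_pow_left₀ (norm_nonneg _) hnear 2, pow_le_pow_left₀ (norm_nonneg _) hnear' 2]

end InnerProductSpace

open Matrix
open scoped Matrix.Norms.L2Operator

section Matrix

variable {𝕜 ι : Type*} [RCLike 𝕜] [Fintype ι]

variable (𝕜 ι) in
noncomputable def EuclideanSpace.uniformUnit : EuclideanSpace 𝕜 ι :=
  WithLp.toLp 2 fun _ => ((√(Fintype.card ι) : ℝ) : 𝕜)⁻¹

theorem EuclideanSpace.norm_uniformUnit [Nonempty ι] : ‖uniformUnit 𝕜 ι‖ = 1 := by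
  have hcard : (0 : ℝ) < Fintype.card ι := by exact_mod_cast Fintype.card_pos
  rw [EuclideanSpace.norm_eq]
  simp [uniformUnit, inv_pow, Real.sq_sqrt hcard.le, hcard.ne']

variable [DecidableEq ι]

theorem Matrix.toEuclideanCLM_eq_rankOne_uniformUnit {P : Matrix ι ι 𝕜}
    (hP : ∀ k l, P k l = 1 / (Fintype.card ι : 𝕜)) :
    toEuclideanCLM (𝕜 := 𝕜) (n := ι) P =
      rankOne 𝕜 (EuclideanSpace.uniformUnit 𝕜 ι) (EuclideanSpace.uniformUnit 𝕜 ι) := by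
  ext x k
  simp only [ofLp_toEuclideanCLM, mulVec, dotProduct, hP, one_div, EuclideanSpace.uniformUnit,
    rankOne_apply, PiLp.inner_apply, RCLike.inner_apply, map_inv₀, RCLike.conj_ofReal,
    PiLp.smul_apply, smul_eq_mul, Finset.sum_mul]
  refine Finset.sum_congr rfl fun l _ => ?_
  rw [mul_assoc, ← mul_inv, ← RCLike.ofReal_mul, Real.mul_self_sqrt (Nat.cast_nonneg _),
    RCLike.ofReal_natCast, mul_comm]

theorem Matrix.trace_toEuclideanCLM (A : Matrix ι ι 𝕜) :
    LinearMap.trace 𝕜 _ (toEuclideanCLM (𝕜 := 𝕜) (n := ι) A : EuclideanSpace 𝕜 ι →ₗ[𝕜] _) =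
      A.trace := by
  rw [coe_toEuclideanCLM_eq_toEuclideanLin, toEuclideanLin_eq_toLin_orthonormal, trace_toLin_eq]

end Matrix

/-- Let `Pₙ ∈ Mₙ(ℂ)` be the rank-one projection all of whose entries are `1/n`.  Then every
partial isometry `v` with zero diagonal satisfies `‖Pₙ - v‖ ≥ 1/3` in the operator norm
induced by the Euclidean norm on `ℂⁿ`. -/
theorem dist_partial_isometry_to_averaging_projection {n : ℕ} (hn : 1 ≤ n)
    (P : Matrix (Fin n) (Fin n) ℂ)
    (hP : ∀ k l : Fin n, P k l = 1 / (n : ℂ))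
    (v : Matrix (Fin n) (Fin n) ℂ)
    (hv : v * vᴴ * v = v)
    (hdiag : ∀ k : Fin n, v k k = 0) :
    (1 : ℝ) / 3 ≤ ‖P - v‖ := by
  have : Nonempty (Fin n) := ⟨⟨0, hn⟩⟩
  have hP' : toEuclideanCLM (𝕜 := ℂ) (n := Fin n) P =
      rankOne ℂ (EuclideanSpace.uniformUnit ℂ (Fin n)) (EuclideanSpace.uniformUnit ℂ (Fin n)) :=
    toEuclideanCLM_eq_rankOne_uniformUnit (by simpa using hP)
  have key := one_le_two_mul_norm_rankOne_self_sub_sq EuclideanSpace.norm_uniformUnit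
    (A := toEuclideanCLM (𝕜 := ℂ) v)
    (by rw [← map_star, ← map_mul, ← map_mul, star_eq_conjTranspose, hv])
    (by rw [trace_toEuclideanCLM, Matrix.trace]; simp [hdiag])
  rw [← hP', ← map_sub] at key
  change 1 ≤ 2 * ‖P - v‖ ^ 2 at key
  nlinarith [norm_nonneg (P - v)]
end

section
/- For 0 < \u03b1 < 1 set \u03b2 = \u221a(1 - \u03b1\u00b2) and define \u03c6_\u03b1 : T_3 \u2192 M_9(\u2102) to be the linear map sending the upper triangular matrix with diagonal entries a, b, c and strictly upper entries x (position (1,2)), y (position (2,3)), z (position (1,3)) to the 9-by-9 matrix whose only nonzero entries are: (3,3) = a, (4,4) = a, (5,5) = b, (7,7) = b, (8,8) = c, (9,9) = c, (3,5) = \u03b1 x, (3,7) = \u03b2 x, (4,5) = -\u03b2 x, (4,7) = \u03b1 x, (5,8) = \u03b1 y, (5,9) = -\u03b2 y, (7,8) = \u03b2 y, (7,9) = \u03b1 y, (3,8) = z, (4,9) = z. Then for \u03b1 \u2260 \u03b3 with 0 < \u03b1, \u03b3 < 1, the maps \u03c6_\u03b1 and \u03c6_\u03b3 are not inner unitarily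 equivalent: there is no unitary u in M_9(\u2102) of block diagonal form u = u_1 \u2295 u_2 \u2295 u_3 with 3-by-3 unitary blocks such that \u03c6_\u03b3(X) = u \u03c6_\u03b1(X) u\u1d34 for all X in T_3. -/
/-!
Conjugation by `u₀ ⊕ u₁ ⊕ u₂` acts on the middle diagonal block (rows and columns 4–6 of the
paper) as conjugation by `u₁`, and there `φ_α(E₁₁)`, `φ_α(E₂₂)`, `φ_α(E₁₂)` are `E₁₁`, `E₂₂`,
`-β_α E₁₂`. The two diagonal entries force `|(u₁)₁₁| = |(u₁)₂₂| = 1`, so the `(1,2)` entry gives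
`β_γ = β_α`, and `t ↦ √(1 - t²)` is injective on `[0, 1]`.
-/

open Matrix

/-- The star-extendible embedding `φ_α : T₃ → T₃ ⊗ M₃ ⊆ M₉(ℂ)` of Example 3.6, defined on an
upper triangular matrix `X` with diagonal entries `a, b, c` and strictly upper entries
`x = X 0 1`, `y = X 1 2`, `z = X 0 2`, with `β = √(1 - α²)`.  (Indices are 0-based, so e.g.
the entry `(3,3) = a` of the paper becomes `(2,2) = a` here.) -/
noncomputable def phiAlpha (α : ℝ) (X : Matrix (Fin 3) (Fin 3) ℂ) : Matrix (Fin 9) (Fin 9) ℂ :=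
  let β : ℂ := (Real.sqrt (1 - α ^ 2) : ℝ)
  let E : Fin 9 → Fin 9 → Matrix (Fin 9) (Fin 9) ℂ := fun p q => Matrix.single p q 1
  X 0 0 • (E 2 2 + E 3 3) + X 1 1 • (E 4 4 + E 6 6) + X 2 2 • (E 7 7 + E 8 8) +
    X 0 1 • ((α : ℂ) • (E 2 4 + E 3 6) + β • E 2 6 - β • E 3 4) +
    X 1 2 • ((α : ℂ) • (E 4 7 + E 6 8) - β • E 4 8 + β • E 6 7) +
    X 0 2 • (E 2 7 + E 3 8)

/-- The block diagonal `9 × 9` matrix `u₀ ⊕ u₁ ⊕ u₂` built from three `3 × 3` blocks. -/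
def blockDiag3 (u : Fin 3 → Matrix (Fin 3) (Fin 3) ℂ) : Matrix (Fin 9) (Fin 9) ℂ :=
  Matrix.of fun p q =>
    if h : (p : ℕ) / 3 = (q : ℕ) / 3 then
      u ⟨(p : ℕ) / 3, by omega⟩ ⟨(p : ℕ) % 3, by omega⟩ ⟨(q : ℕ) % 3, by omega⟩
    else 0

/-- Index `i` of the `k`-th diagonal block, i.e. `3 * k + i`. -/
def blockIdx (k i : Fin 3) : Fin 9 := finProdFinEquiv (k, i)

theorem sum_eq_sum_blockIdx {M : Type*} [AddCommMonoid M] (f : Fin 9 → M) : ∑ p, f p = ∑ k, ∑ i, f (blockIdx k i) := by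
  rw [← Fintype.sum_prod_type']
  exact (Equiv.sum_comp (finProdFinEquiv (m := 3) (n := 3)) f).symm

theorem blockDiag3_apply_blockIdx (u : Fin 3 → Matrix (Fin 3) (Fin 3) ℂ) (k i l j : Fin 3) :
    blockDiag3 u (blockIdx k i) (blockIdx l j) = if k = l then u k i j else 0 := by
  have hdiv (k i : Fin 3) : ((blockIdx k i : Fin 9) : ℕ) / 3 = k := by
    simp only [blockIdx, finProdFinEquiv_apply_val]; omega
  have hmod (k i : Fin 3) : ((blockIdx k i : Fin 9) : ℕ) % 3 = i := by
    simp only [blockIdx, finProdFinEquiv_apply_val]; omega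
  by_cases hkl : k = l
  · subst hkl
    simp [blockDiag3, hdiv, hmod]
  · simp [blockDiag3, hdiv, hkl, Fin.val_ne_of_ne hkl]

theorem blockDiag3_mul_apply (u : Fin 3 → Matrix (Fin 3) (Fin 3) ℂ) (B : Matrix (Fin 9) (Fin 9) ℂ)
    (k i : Fin 3) (q : Fin 9) :
    (blockDiag3 u * B) (blockIdx k i) q = ∑ r, u k i r * B (blockIdx k r) q := by
  simp [mul_apply, sum_eq_sum_blockIdx, blockDiag3_apply_blockIdx, ite_mul]

theorem mul_conjTranspose_blockDiag3_apply (u : Fin 3 → Matrix (Fin 3) (Fin 3) ℂ)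
    (B : Matrix (Fin 9) (Fin 9) ℂ) (p : Fin 9) (l j : Fin 3) :
    (B * (blockDiag3 u)ᴴ) p (blockIdx l j) = ∑ s, B p (blockIdx l s) * star (u l j s) := by
  simp [mul_apply, sum_eq_sum_blockIdx, blockDiag3_apply_blockIdx, apply_ite (starRingEnd ℂ),
    mul_ite]

theorem submatrix_blockDiag3_mul_mul_conjTranspose (u : Fin 3 → Matrix (Fin 3) (Fin 3) ℂ)
    (A : Matrix (Fin 9) (Fin 9) ℂ) (k l : Fin 3) :
    (blockDiag3 u * A * (blockDiag3 u)ᴴ).submatrix (blockIdx k) (blockIdx l) =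
      u k * A.submatrix (blockIdx k) (blockIdx l) * (u l)ᴴ := by
  ext i j
  rw [submatrix_apply, Matrix.mul_assoc, blockDiag3_mul_apply]
  simp only [mul_conjTranspose_blockDiag3_apply]
  simp only [mul_apply, submatrix_apply, conjTranspose_apply, Finset.mul_sum, Finset.sum_mul,
    mul_assoc]
  exact Finset.sum_comm

theorem phiAlpha_submatrix_blockIdx_one (α : ℝ) (X : Matrix (Fin 3) (Fin 3) ℂ) :
    (phiAlpha α X).submatrix (blockIdx 1) (blockIdx 1) =
      !![X 0 0, -(X 0 1 * ((√(1 - α ^ 2) : ℝ) : ℂ)), 0; 0, X 1 1, 0; 0, 0, 0] := by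
  ext i j
  fin_cases i <;> fin_cases j <;>
    simp [phiAlpha, Matrix.single, show blockIdx 1 0 = 3 from rfl, show blockIdx 1 1 = 4 from rfl,
      show blockIdx 1 2 = 5 from rfl]

theorem single_apply_of_lt {n : ℕ} {α : Type*} [Zero α] {i j : Fin n} (hij : i ≤ j) (c : α)
    {p q : Fin n} (hqp : (q : ℕ) < p) : single i j c p q = 0 := by
  rw [single_apply_of_ne]
  rintro ⟨rfl, rfl⟩
  exact absurd hij (not_le.mpr hqp)

theorem norm_eq_of_eq_mul_mul_star {a b z w : ℂ} (hz : z * star z = 1) (hw : w * star w = 1)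
    (h : a = z * b * star w) : ‖a‖ = ‖b‖ := by
  have hnorm {v : ℂ} (hv : v * star v = 1) : ‖v‖ = 1 := by
    rw [Complex.star_def, Complex.mul_conj'] at hv
    exact (pow_eq_one_iff_of_nonneg (norm_nonneg v) two_ne_zero).mp (by exact_mod_cast hv)
  simp [h, hnorm hz, hnorm hw]

theorem sqrt_one_sub_sq_injOn : Set.InjOn (fun t : ℝ => √(1 - t ^ 2)) (Set.Icc 0 1) := by
  intro s ⟨hs0, hs1⟩ t ⟨ht0, ht1⟩ h
  have hsq : s ^ 2 = t ^ 2 := by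
    have := (Real.sqrt_inj (by nlinarith) (by nlinarith)).mp h
    linarith
  exact (pow_left_inj₀ hs0 ht0 two_ne_zero).mp hsq

/-- For `0 < α, γ < 1` with `α ≠ γ`, the maps `φ_α` and `φ_γ` are not inner unitarily
equivalent: no unitary of the block diagonal form `u₀ ⊕ u₁ ⊕ u₂` with `3 × 3` unitary blocks
conjugates `φ_α(X)` to `φ_γ(X)` for all upper triangular `X`. -/
theorem phiAlpha_not_inner_conjugate (α γ : ℝ)
    (hα0 : 0 < α) (hα1 : α < 1) (hγ0 : 0 < γ) (hγ1 : γ < 1) (hne : α ≠ γ) :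
    ¬ ∃ u : Fin 3 → Matrix (Fin 3) (Fin 3) ℂ,
        (∀ i, (u i)ᴴ * u i = 1 ∧ u i * (u i)ᴴ = 1) ∧
        ∀ X : Matrix (Fin 3) (Fin 3) ℂ, (∀ p q : Fin 3, (q : ℕ) < (p : ℕ) → X p q = 0) →
          phiAlpha γ X = blockDiag3 u * phiAlpha α X * (blockDiag3 u)ᴴ := by
  rintro ⟨u, -, hconj⟩
  have hmiddle {i j : Fin 3} (hij : i ≤ j) :
      (phiAlpha γ (single i j 1)).submatrix (blockIdx 1) (blockIdx 1) =
        u 1 * (phiAlpha α (single i j 1)).submatrix (blockIdx 1) (blockIdx 1) * (u 1)ᴴ := by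
    rw [hconj _ fun _ _ => single_apply_of_lt hij 1, submatrix_blockDiag3_mul_mul_conjTranspose]
  simp only [phiAlpha_submatrix_blockIdx_one] at hmiddle
  have h00 : u 1 0 0 * star (u 1 0 0) = 1 := by
    simpa [mul_apply, Fin.sum_univ_three] using (congrFun₂ (hmiddle (le_refl 0)) 0 0).symm
  have h11 : u 1 1 1 * star (u 1 1 1) = 1 := by
    simpa [mul_apply, Fin.sum_univ_three] using (congrFun₂ (hmiddle (le_refl 1)) 1 1).symm
  have h01 : ((√(1 - γ ^ 2) : ℝ) : ℂ) = u 1 0 0 * ((√(1 - α ^ 2) : ℝ) : ℂ) * star (u 1 1 1) := by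
    simpa [mul_apply, Fin.sum_univ_three] using
      congrFun₂ (hmiddle (i := 0) (j := 1) (by decide)) 0 1
  have hβ := norm_eq_of_eq_mul_mul_star h00 h11 h01
  simp only [Complex.norm_real, Real.norm_eq_abs, abs_of_nonneg (Real.sqrt_nonneg _)] at hβ
  exact hne (sqrt_one_sub_sq_injOn ⟨hα0.le, hα1.le⟩ ⟨hγ0.le, hγ1.le⟩ hβ.symm)
end
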